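/- For a vector space V over a field of characteristic zero, the linear map on the n-fold tensor power V^{⊗n} sending v₁⊗···⊗vₙ to the iterated Lie bracket [...[[v₁,v₂],v₃],...,vₙ] (brackets taken in the tensor algebra, [a,b] = ab − ba) is a projection up to the scalar n; i.e., composing this map with itself equals n times the map. -/

import Mathlib

/-- The left-normed iterated commutator `[...[[a₁,a₂],a₃],...,aₙ]` of a list,
with `[a,b] = a*b - b*a`; `0` for the empty list. -/
def lnbList {A : Type*} [Ring A] : List A → A
  | [] => 0
  | a :: l => l.foldl (fun x y => x * y - y * x) a

namespace DSWAux

open TensorAlgebra MulOpposite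

variable {k : Type*} [CommRing k] {V : Type*} [AddCommGroup V] [Module k V]

/-- The operator on `k × T(V)` corresponding to right multiplication by `ι v`
in the "Dynkin" representation. -/
noncomputable def Tmap (v : V) : Module.End k (k × TensorAlgebra k V) where
  toFun p := (0, p.1 • ι k v + (p.2 * ι k v - ι k v * p.2))
  map_add' p q := by
    simp only [Prod.fst_add, Prod.snd_add, Prod.mk_add_mk, Prod.mk.injEq, add_smul]
    constructor
    · simp
    · noncomm_ring
  map_smul' c p := by
    simp only [Prod.smul_fst, Prod.smul_snd, RingHom.id_apply, Prod.smul_mk, Prod.mk.injEq,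
      smul_zero, smul_add, smul_sub, smul_mul_assoc, mul_smul_comm, smul_smul, smul_eq_mul,
      true_and, mul_zero, and_true]

noncomputable def Fmap : V →ₗ[k] (Module.End k (k × TensorAlgebra k V))ᵐᵒᵖ where
  toFun v := op (Tmap v)
  map_add' v u := by
    rw [← op_add]
    refine congrArg op (LinearMap.ext fun p => ?_)
    refine Prod.ext ?_ ?_
    · show (0 : k) = 0 + 0
      simp
    · show p.1 • ι k (v + u) + (p.2 * ι k (v + u) - ι k (v + u) * p.2)
        = (p.1 • ι k v + (p.2 * ι k v - ι k v * p.2))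
          + (p.1 • ι k u + (p.2 * ι k u - ι k u * p.2))
      simp only [map_add, smul_add]
      noncomm_ring
  map_smul' c v := by
    rw [RingHom.id_apply, ← op_smul]
    refine congrArg op (LinearMap.ext fun p => ?_)
    refine Prod.ext ?_ ?_
    · show (0 : k) = c • (0 : k)
      simp
    · show p.1 • ι k (c • v) + (p.2 * ι k (c • v) - ι k (c • v) * p.2)
        = c • (p.1 • ι k v + (p.2 * ι k v - ι k v * p.2))
      simp only [map_smul, smul_comm p.1 c, mul_smul_comm, smul_mul_assoc, smul_sub, smul_add]

noncomputable def Psi : TensorAlgebra k V →ₐ[k] (Module.End k (k × TensorAlgebra k V))ᵐᵒᵖ :=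
  TensorAlgebra.lift k Fmap

noncomputable def U (x : TensorAlgebra k V) : (k × TensorAlgebra k V) →ₗ[k] (k × TensorAlgebra k V) :=
  (Psi (k := k) x).unop

lemma U_mul (x y : TensorAlgebra k V) (p : k × TensorAlgebra k V) :
    U (x * y) p = U y (U x p) := by
  simp only [U, map_mul, unop_mul, Module.End.mul_apply]

lemma U_one (p : k × TensorAlgebra k V) : U (1 : TensorAlgebra k V) p = p := by
  simp only [U, map_one, unop_one, Module.End.one_apply]

lemma U_add (x y : TensorAlgebra k V) (p) : U (x + y) p = U x p + U y p := by
  simp only [U, map_add, unop_add, LinearMap.add_apply]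

lemma U_sub (x y : TensorAlgebra k V) (p) : U (x - y) p = U x p - U y p := by
  simp only [U, map_sub, unop_sub, LinearMap.sub_apply]

lemma U_smul (c : k) (x : TensorAlgebra k V) (p) : U (c • x) p = c • U x p := by
  simp only [U, map_smul, unop_smul, LinearMap.smul_apply]

lemma U_zero (p : k × TensorAlgebra k V) : U (0 : TensorAlgebra k V) p = 0 := by
  simp only [U, map_zero, unop_zero, LinearMap.zero_apply]

lemma U_iota (v : V) (p : k × TensorAlgebra k V) :
    U (ι k v) p = (0, p.1 • ι k v + (p.2 * ι k v - ι k v * p.2)) := by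
  simp only [U, Psi, TensorAlgebra.lift_ι_apply]
  rfl

/-- augmentation component -/
noncomputable def ee (x : TensorAlgebra k V) : k := (U x (1, 0)).1

/-- the Dynkin bracketing map -/
noncomputable def Dyn (x : TensorAlgebra k V) : TensorAlgebra k V := (U x (1, 0)).2

/-- the right-bracketing action -/
noncomputable def rho (x a : TensorAlgebra k V) : TensorAlgebra k V := (U x (0, a)).2

lemma U_zero_fst (x : TensorAlgebra k V) : ∀ a, (U x (0, a)).1 = 0 := by
  induction x using TensorAlgebra.induction with
  | algebraMap r =>
      intro a
      have : Psi (k := k) (algebraMap k (TensorAlgebra k V) r)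
          = algebraMap k ((Module.End k (k × TensorAlgebra k V))ᵐᵒᵖ) r := Psi.commutes r
      simp only [U, this]
      show ((r • (1 : Module.End k (k × TensorAlgebra k V))) (0, a)).1 = 0
      simp
  | ι v => intro a; rw [U_iota]
  | mul x y hx hy =>
      intro a
      rw [U_mul]
      have h1 : U x (0, a) = (0, (U x (0, a)).2) := Prod.ext (hx a) rfl
      rw [h1]
      exact hy _
  | add x y hx hy =>
      intro a
      rw [U_add]
      simp [hx a, hy a]

lemma U_pair_zero (x : TensorAlgebra k V) (a : TensorAlgebra k V) :
    U x (0, a) = (0, rho x a) := Prod.ext (U_zero_fst x a) rfl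

lemma U_pair_one (x : TensorAlgebra k V) : U x (1, 0) = (ee x, Dyn x) := rfl

lemma pair_split (c : k) (a : TensorAlgebra k V) :
    (c, a) = c • ((1 : k), (0 : TensorAlgebra k V)) + (0, a) := by
  simp

lemma ee_mul (x y : TensorAlgebra k V) : ee (x * y) = ee x * ee y := by
  show (U (x * y) (1, 0)).1 = _
  rw [U_mul, U_pair_one, pair_split, map_add, map_smul, U_pair_zero]
  simp [ee]

lemma Dyn_mul (x y : TensorAlgebra k V) :
    Dyn (x * y) = ee x • Dyn y + rho y (Dyn x) := by
  show (U (x * y) (1, 0)).2 = _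
  rw [U_mul, U_pair_one, pair_split, map_add, map_smul, U_pair_zero]
  simp [Dyn]

lemma rho_mul (x y a : TensorAlgebra k V) : rho (x * y) a = rho y (rho x a) := by
  show (U (x * y) (0, a)).2 = _
  rw [U_mul, U_pair_zero]
  rfl

lemma ee_iota (v : V) : ee (ι k v : TensorAlgebra k V) = 0 := by
  show (U (ι k v) (1, 0)).1 = 0
  rw [U_iota]

lemma Dyn_iota (v : V) : Dyn (ι k v : TensorAlgebra k V) = ι k v := by
  show (U (ι k v) (1, 0)).2 = _
  rw [U_iota]
  simp

lemma rho_iota (v : V) (a : TensorAlgebra k V) :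
    rho (ι k v) a = a * ι k v - ι k v * a := by
  show (U (ι k v) (0, a)).2 = _
  rw [U_iota]
  simp

lemma ee_one : ee (1 : TensorAlgebra k V) = 1 := by
  show (U (1 : TensorAlgebra k V) (1, 0)).1 = 1
  rw [U_one]

lemma Dyn_one : Dyn (1 : TensorAlgebra k V) = 0 := by
  show (U (1 : TensorAlgebra k V) (1, 0)).2 = 0
  rw [U_one]

lemma Dyn_zero : Dyn (0 : TensorAlgebra k V) = 0 := by
  show (U (0 : TensorAlgebra k V) (1, 0)).2 = 0
  rw [U_zero]
  rfl

lemma Dyn_add (x y : TensorAlgebra k V) : Dyn (x + y) = Dyn x + Dyn y := by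
  show (U (x + y) (1, 0)).2 = _
  rw [U_add]; rfl

lemma Dyn_sub (x y : TensorAlgebra k V) : Dyn (x - y) = Dyn x - Dyn y := by
  show (U (x - y) (1, 0)).2 = _
  rw [U_sub]; rfl

lemma Dyn_smul (c : k) (x : TensorAlgebra k V) : Dyn (c • x) = c • Dyn x := by
  show (U (c • x) (1, 0)).2 = _
  rw [U_smul]; rfl

lemma rho_sub (x y a : TensorAlgebra k V) : rho (x - y) a = rho x a - rho y a := by
  show (U (x - y) (0, a)).2 = _
  rw [U_sub]; rfl

lemma ee_sub (x y : TensorAlgebra k V) : ee (x - y) = ee x - ee y := by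
  show (U (x - y) (1, 0)).1 = _
  rw [U_sub]; rfl

/-! ### list-level objects -/

/-- the product of `ι`'s over a list -/
noncomputable def PP (l : List V) : TensorAlgebra k V := (l.map (ι k)).prod

/-- the left-normed bracketing over a list -/
noncomputable def BB (l : List V) : TensorAlgebra k V := lnbList (l.map (ι k))

lemma PP_nil : PP (k := k) ([] : List V) = 1 := rfl

lemma PP_concat (l : List V) (v : V) : PP (k := k) (l ++ [v]) = PP l * ι k v := by
  simp [PP]

lemma BB_nil : BB (k := k) ([] : List V) = 0 := rfl

lemma BB_singleton (v : V) : BB (k := k) [v] = ι k v := rfl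

lemma BB_cons (a : V) (l : List V) :
    BB (k := k) (a :: l) = (l.map (ι k)).foldl (fun x y => x * y - y * x) (ι k a) := rfl

lemma BB_concat (a : V) (l : List V) (v : V) :
    BB (k := k) (a :: (l ++ [v])) = BB (a :: l) * ι k v - ι k v * BB (a :: l) := by
  rw [BB_cons, BB_cons, List.map_append, List.foldl_append]
  rfl

lemma ee_PP (a : V) (l : List V) : ee (PP (k := k) (a :: l)) = 0 := by
  induction l using List.reverseRecOn with
  | nil =>
      show ee ((([a] : List V).map (ι k)).prod) = 0
      simp [ee_iota, ee_mul, ee_one]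
  | append_singleton l v ih =>
      rw [show a :: (l ++ [v]) = (a :: l) ++ [v] by simp, PP_concat, ee_mul, ih, zero_mul]

lemma Dyn_PP (l : List V) : Dyn (PP (k := k) l) = BB l := by
  induction l using List.reverseRecOn with
  | nil => rw [PP_nil, Dyn_one, BB_nil]
  | append_singleton l v ih =>
      rw [PP_concat, Dyn_mul, Dyn_iota, rho_iota, ih]
      cases l with
      | nil =>
          rw [PP_nil, ee_one, BB_nil]
          simp [BB_singleton]
      | cons a l' => rw [ee_PP, List.cons_append, BB_concat, zero_smul, zero_add]

lemma rho_BB (a : V) (l : List V) (x : TensorAlgebra k V) :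
    rho (BB (k := k) (a :: l)) x = x * BB (a :: l) - BB (a :: l) * x := by
  induction l using List.reverseRecOn generalizing x with
  | nil => rw [BB_singleton, rho_iota]
  | append_singleton l v ih =>
      rw [BB_concat, rho_sub, rho_mul, rho_mul, rho_iota, ih, ih, rho_iota]
      noncomm_ring

lemma mem_BB (a : V) (l : List V) :
    BB (k := k) (a :: l)
      ∈ (LinearMap.range (ι k (M := V)) : Submodule k (TensorAlgebra k V)) ^ (l.length + 1) := by
  induction l using List.reverseRecOn with
  | nil =>
      simp only [List.length_nil, Nat.zero_add, pow_one, BB_singleton]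
      exact LinearMap.mem_range_self _ a
  | append_singleton l v ih =>
      rw [BB_concat]
      have hv : ι k v ∈ (LinearMap.range (ι k (M := V)) : Submodule k (TensorAlgebra k V)) :=
        LinearMap.mem_range_self _ v
      have hlen : (l ++ [v]).length + 1 = (l.length + 1) + 1 := by simp
      rw [hlen]
      refine sub_mem ?_ ?_
      · rw [pow_succ]
        exact Submodule.mul_mem_mul ih hv
      · rw [pow_succ']
        exact Submodule.mul_mem_mul hv ih

lemma ee_BB (a : V) (l : List V) : ee (BB (k := k) (a :: l)) = 0 := by
  induction l using List.reverseRecOn with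
  | nil => rw [BB_singleton, ee_iota]
  | append_singleton l v ih =>
      rw [BB_concat, ee_sub, ee_mul, ee_mul, ee_iota, ih]
      ring

lemma Dyn_BB (l : List V) : Dyn (BB (k := k) l) = l.length • BB l := by
  cases l with
  | nil => rw [BB_nil, Dyn_zero]; simp
  | cons a l =>
      induction l using List.reverseRecOn with
      | nil => rw [BB_singleton, Dyn_iota]; simp
      | append_singleton l v ih =>
          rw [BB_concat, Dyn_sub, Dyn_mul, Dyn_mul, Dyn_iota, rho_iota, rho_BB, ih, ee_iota,
            ee_BB, zero_smul, zero_add, zero_smul, zero_add]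
          rw [show (a :: (l ++ [v])).length = (a :: l).length + 1 by simp, succ_nsmul,
            smul_sub, smul_mul_assoc, mul_smul_comm]
          abel

end DSWAux

open DSWAux Pointwise in
/-- Let `V` be a vector space over a field of characteristic zero and `w` the linear
map which on pure tensors `v₁⊗⋯⊗vₙ ∈ V^{⊗n} ⊆ T(V)` is the left-normed bracketing
`[...[v₁,v₂],...,vₙ]`.  Then on the degree-`n` component `V^{⊗n}` we have `w∘w = n·w`. -/
theorem stmt1 (k : Type*) [Field k] [CharZero k] (V : Type*) [AddCommGroup V] [Module k V]
    (n : ℕ)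
    (w : TensorAlgebra k V →ₗ[k] TensorAlgebra k V)
    (hw : ∀ v : Fin n → V,
      w ((List.ofFn fun i => TensorAlgebra.ι k (v i)).prod) =
        lnbList (List.ofFn fun i => TensorAlgebra.ι k (v i)))
    (x : TensorAlgebra k V)
    (hx : x ∈ (LinearMap.range (TensorAlgebra.ι k (M := V)) ^ n :
      Submodule k (TensorAlgebra k V))) :
    w (w x) = (n : k) • w x := by
  classical
  set M : Submodule k (TensorAlgebra k V) := LinearMap.range (TensorAlgebra.ι k (M := V)) with hM
  have hMspan : M = Submodule.span k (Set.range (TensorAlgebra.ι k (M := V))) := by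
    rw [hM, ← LinearMap.coe_range (TensorAlgebra.ι k (M := V)), Submodule.span_eq]
  have hpow : (M ^ n : Submodule k (TensorAlgebra k V))
      = Submodule.span k ((Set.range (TensorAlgebra.ι k (M := V))) ^ n) := by
    rw [hMspan, Submodule.span_pow]
  -- the main claim, proven by span induction
  have key : ∀ y ∈ (M ^ n : Submodule k (TensorAlgebra k V)),
      w y = Dyn y ∧ Dyn y ∈ (M ^ n : Submodule k (TensorAlgebra k V)) ∧
        Dyn (Dyn y) = (n : k) • Dyn y := by
    intro y hy
    rw [hpow] at hy
    induction hy using Submodule.span_induction with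
    | mem y hy =>
        obtain ⟨f, hf⟩ := Set.mem_pow.mp hy
        have hvex : ∀ i, ∃ u : V, TensorAlgebra.ι k u = (f i : TensorAlgebra k V) :=
          fun i => (f i).2
        choose v hv using hvex
        have hfn : (fun i => (f i : TensorAlgebra k V)) = fun i => TensorAlgebra.ι k (v i) := by
          funext i; rw [hv]
        have hy' : y = PP (k := k) (List.ofFn v) := by
          rw [← hf, hfn, PP, List.map_ofFn]
          rfl
        have hBB : lnbList (List.ofFn fun i => TensorAlgebra.ι k (v i))
            = BB (k := k) (List.ofFn v) := by
          rw [BB, List.map_ofFn]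
          rfl
        have hwy : w y = BB (k := k) (List.ofFn v) := by
          rw [hy', ← hBB, PP, List.map_ofFn]
          exact hw v
        have hDy : Dyn y = BB (k := k) (List.ofFn v) := by rw [hy', Dyn_PP]
        refine ⟨by rw [hwy, hDy], ?_, ?_⟩
        · rw [hDy]
          cases n with
          | zero =>
              have : (List.ofFn v : List V) = [] := by
                simp
              rw [this, BB_nil]
              exact zero_mem _
          | succ m =>
              have h1 : (List.ofFn v : List V) = v 0 :: List.ofFn (fun i => v i.succ) :=
                List.ofFn_succ
              have h2 : (List.ofFn (fun i : Fin m => v i.succ)).length = m := by simp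
              rw [h1]
              have := mem_BB (k := k) (v 0) (List.ofFn (fun i => v i.succ))
              rwa [h2] at this
        · rw [hDy, Dyn_BB]
          have : (List.ofFn v : List V).length = n := by simp
          rw [this, Nat.cast_smul_eq_nsmul]
    | zero =>
        refine ⟨by rw [map_zero, Dyn_zero], by rw [Dyn_zero]; exact zero_mem _, ?_⟩
        rw [Dyn_zero, Dyn_zero, smul_zero]
    | add a b _ _ ha hb =>
        obtain ⟨h1a, h2a, h3a⟩ := ha
        obtain ⟨h1b, h2b, h3b⟩ := hb
        refine ⟨by rw [map_add, Dyn_add, h1a, h1b], ?_, ?_⟩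
        · rw [Dyn_add]; exact add_mem h2a h2b
        · rw [Dyn_add, Dyn_add, h3a, h3b, smul_add]
    | smul c a _ ha =>
        obtain ⟨h1a, h2a, h3a⟩ := ha
        refine ⟨by rw [map_smul, Dyn_smul, h1a], ?_, ?_⟩
        · rw [Dyn_smul]; exact Submodule.smul_mem _ _ h2a
        · rw [Dyn_smul, Dyn_smul, h3a, smul_comm]
  obtain ⟨h1, h2, h3⟩ := key x hx
  obtain ⟨g1, g2, g3⟩ := key (Dyn x) h2
  rw [h1, g1, h3]
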